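/- Let X be the Hermitian curve over F_{q^2}. Fix integers d ≥ s ≥ 1, distinct points P_1, ..., P_s ∈ X(F_{q^2}), and integers b_1, ..., b_s with 0 ≤ b_i ≤ d + 2 − i and b_i ≤ q + 1 for all i. Let E = Σ b_i P_i, viewed as a zero-dimensional subscheme of P^2 of degree Σ b_i. Then h^1(P^2, I_E(d)) = 0. -/

import Mathlib

/-!
The Hermitian form `h(u, w) = u₁ w₂^q + u₂ w₁^q - u₀ w₀^q` admits no totally isotropic plane, so the
tangent line `h(·, P_j) = 0` to the curve at `P_j` passes through no other point `P_i`. Choose a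
linear form `z` vanishing at `P_i` but not along the tangent direction `v_i`, and a linear form `y`
not vanishing at `P_i`. For `m + i ≤ d` the form `y^(d-m-i) z^m ∏_{j<i} h(·, P_j)` then vanishes
identically on the tangent lines at `P_j`, `j < i`, and vanishes to order exactly `m` at `P_i` along
the tangent line at `P_i`. Ordering the conditions `(i, m)` lexicographically, these forms are
triangular, so the conditions are independent.
-/

open MvPolynomial Polynomial

/-- The Hermitian curve over `F_{q²}`: the projectivization of the affine
equation `y + y^q = x^{q+1}` (coordinates `x = X 0`, `y = X 1`, `z = X 2`). -/
noncomputable def hermitianPoly (F : Type*) [Field F] (q : ℕ) : MvPolynomial (Fin 3) F :=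
  MvPolynomial.X 1 * MvPolynomial.X 2 ^ q + MvPolynomial.X 1 ^ q * MvPolynomial.X 2
    - MvPolynomial.X 0 ^ (q + 1)

open Matrix

section LinearAlgebra

variable {F : Type*} [Field F]

theorem exists_smul_eq_of_cross_eq_zero {u w : Fin 3 → F} (hu : u ≠ 0) (h : u ⨯₃ w = 0) :
    ∃ a : F, a • u = w := by
  by_contra! hind
  exact crossProduct_ne_zero_iff_linearIndependent.2 ((LinearIndependent.pair_iff' hu).2 hind) h

theorem exists_smul_cross_eq_of_dotProduct_eq_zero {u w x : Fin 3 → F} (huw : u ⨯₃ w ≠ 0)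
    (hxu : x ⬝ᵥ u = 0) (hxw : x ⬝ᵥ w = 0) : ∃ a : F, a • (u ⨯₃ w) = x := by
  refine exists_smul_eq_of_cross_eq_zero huw ?_
  rw [← cross_anticomm, cross_cross_eq_smul_sub_smul', hxw, dotProduct_comm, hxu]
  simp

variable {σ : Type*} [Fintype σ]

theorem exists_dotProduct_ne_zero {u : σ → F} (hu : u ≠ 0) : ∃ z : σ → F, z ⬝ᵥ u ≠ 0 := by
  classical
  obtain ⟨j, hj⟩ := Function.ne_iff.1 hu
  exact ⟨Pi.single j 1, by simpa [single_dotProduct] using hj⟩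

theorem exists_dotProduct_eq_zero_ne_zero {u w : σ → F} (h : LinearIndependent F ![u, w]) :
    ∃ z : σ → F, z ⬝ᵥ u = 0 ∧ z ⬝ᵥ w ≠ 0 := by
  classical
  have hw : w ∉ Submodule.span F {u} := by
    rw [Submodule.mem_span_singleton]
    exact not_exists.2 ((LinearIndependent.pair_iff' (h.ne_zero 0)).1 h)
  obtain ⟨f, hfw, hfu⟩ := Submodule.exists_dual_map_eq_bot_of_notMem hw inferInstance
  have hf : ∀ x, (dotProductEquiv F σ).symm f ⬝ᵥ x = f x := fun x => by
    rw [← dotProductEquiv_apply_apply, LinearEquiv.apply_symm_apply]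
  refine ⟨(dotProductEquiv F σ).symm f, ?_, by rwa [hf]⟩
  have hu : f u ∈ (Submodule.span F {u}).map f :=
    Submodule.mem_map_of_mem (Submodule.mem_span_singleton_self u)
  rw [hfu, Submodule.mem_bot] at hu
  rw [hf, hu]

end LinearAlgebra

section LineRestriction

variable {σ R : Type*} [CommRing R]

noncomputable def restrictLine (a w : σ → R) : MvPolynomial σ R →ₐ[R] R[X] :=
  aeval fun j => Polynomial.C (a j) + Polynomial.X * Polynomial.C (w j)

theorem eval_zero_restrictLine (a w : σ → R) (f : MvPolynomial σ R) :
    (restrictLine a w f).eval 0 = MvPolynomial.eval a f := by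
  rw [← Polynomial.coe_aeval_eq_eval, restrictLine, comp_aeval_apply,
    ← MvPolynomial.coe_aeval_eq_eval]
  simp

variable [Fintype σ]

noncomputable def linearForm (z : σ → R) : MvPolynomial σ R :=
  ∑ j, MvPolynomial.C (z j) * MvPolynomial.X j

theorem isHomogeneous_linearForm (z : σ → R) : (linearForm z).IsHomogeneous 1 :=
  IsHomogeneous.sum _ _ _ fun j _ => isHomogeneous_C_mul_X (z j) j

theorem eval_linearForm (a z : σ → R) : MvPolynomial.eval a (linearForm z) = z ⬝ᵥ a := by
  simp [linearForm, dotProduct]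

theorem restrictLine_linearForm (a w z : σ → R) :
    restrictLine a w (linearForm z) =
      Polynomial.C (z ⬝ᵥ a) + Polynomial.C (z ⬝ᵥ w) * Polynomial.X := by
  simp only [restrictLine, linearForm, dotProduct, map_sum, map_mul, MvPolynomial.aeval_C,
    MvPolynomial.aeval_X, Polynomial.algebraMap_eq, Finset.sum_mul, ← Finset.sum_add_distrib]
  exact Finset.sum_congr rfl fun j _ => by ring

theorem restrictLine_mul_linearForm_pow {a w z : σ → R} (hz : z ⬝ᵥ a = 0) (f : MvPolynomial σ R)
    (m : ℕ) : restrictLine a w (f * linearForm z ^ m) =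
      Polynomial.X ^ m * (Polynomial.C ((z ⬝ᵥ w) ^ m) * restrictLine a w f) := by
  rw [map_mul, map_pow, restrictLine_linearForm, hz, Polynomial.C_0, zero_add, mul_pow,
    Polynomial.C_pow]
  ring

theorem coeff_restrictLine_mul_linearForm_pow_of_lt {a w z : σ → R} (hz : z ⬝ᵥ a = 0)
    (f : MvPolynomial σ R) {m n : ℕ} (h : n < m) :
    (restrictLine a w (f * linearForm z ^ m)).coeff n = 0 := by
  rw [restrictLine_mul_linearForm_pow hz, coeff_X_pow_mul', if_neg h.not_ge]

theorem coeff_restrictLine_mul_linearForm_pow_self {a w z : σ → R} (hz : z ⬝ᵥ a = 0)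
    (f : MvPolynomial σ R) (m : ℕ) :
    (restrictLine a w (f * linearForm z ^ m)).coeff m = (z ⬝ᵥ w) ^ m * MvPolynomial.eval a f := by
  rw [restrictLine_mul_linearForm_pow hz, coeff_X_pow_mul', if_pos le_rfl, Nat.sub_self,
    Polynomial.coeff_C_mul, Polynomial.coeff_zero_eq_eval_zero, eval_zero_restrictLine]

end LineRestriction

theorem LinearMap.surjective_of_triangular {K M ι : Type*} [Field K] [AddCommGroup M] [Module K M]
    [Fintype ι] [LinearOrder ι] (f : M →ₗ[K] ι → K) (x : ι → M) (hdiag : ∀ a, f (x a) a ≠ 0)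
    (htri : ∀ a b, b < a → f (x a) b = 0) : Function.Surjective f := by
  classical
  let A : Matrix ι ι K := fun a => f (x a)
  have hA : IsUnit A := by
    rw [Matrix.isUnit_iff_isUnit_det,
      Matrix.det_of_isUpperTriangular (M := A) fun a b h => htri a b h]
    exact (Finset.prod_ne_zero_iff.2 fun a _ => hdiag a).isUnit
  intro y
  obtain ⟨c, hc⟩ := Matrix.vecMul_surjective_iff_isUnit.2 hA y
  refine ⟨∑ a, c a • x a, ?_⟩
  rw [← hc, map_sum]
  simp_rw [map_smul]
  exact (Matrix.vecMul_eq_sum c A).symm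

section Interpolation

variable {σ F : Type*} [Fintype σ] [Field F] {s d : ℕ} {P v ℓ : Fin s → σ → F}

theorem exists_form_restrictLine_triangular (hPv : ∀ i, LinearIndependent F ![P i, v i])
    (hℓP : ∀ j, ℓ j ⬝ᵥ P j = 0) (hℓv : ∀ j, ℓ j ⬝ᵥ v j = 0) (hℓ : ∀ i j, j < i → ℓ j ⬝ᵥ P i ≠ 0)
    (i : Fin s) (m : ℕ) (hm : m + i ≤ d) :
    ∃ g ∈ homogeneousSubmodule σ F d, (restrictLine (P i) (v i) g).coeff m ≠ 0 ∧
      (∀ n < m, (restrictLine (P i) (v i) g).coeff n = 0) ∧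
      ∀ i' < i, restrictLine (P i') (v i') g = 0 := by
  obtain ⟨y, hy⟩ := exists_dotProduct_ne_zero ((hPv i).ne_zero 0)
  obtain ⟨z, hzP, hzv⟩ := exists_dotProduct_eq_zero_ne_zero (hPv i)
  set g₀ := linearForm y ^ (d - m - i) * ∏ j ∈ Finset.Iio i, linearForm (ℓ j)
  refine ⟨g₀ * linearForm z ^ m, ?_, ?_, fun n hn => ?_, fun i' hi' => ?_⟩
  · have hdeg : 1 * (d - m - i) + ∑ _j ∈ Finset.Iio i, 1 + 1 * m = d := by
      simp only [Finset.sum_const, smul_eq_mul, mul_one, one_mul, Fin.card_Iio]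
      omega
    rw [mem_homogeneousSubmodule, ← hdeg]
    exact (((isHomogeneous_linearForm y).pow _).mul (IsHomogeneous.prod _ _ _
      fun j _ => isHomogeneous_linearForm (ℓ j))).mul ((isHomogeneous_linearForm z).pow m)
  · rw [coeff_restrictLine_mul_linearForm_pow_self hzP]
    simp only [g₀, map_mul, map_pow, map_prod, eval_linearForm]
    refine mul_ne_zero (pow_ne_zero _ hzv) (mul_ne_zero (pow_ne_zero _ hy) ?_)
    exact Finset.prod_ne_zero_iff.2 fun j hj => hℓ i j (Finset.mem_Iio.1 hj)
  · exact coeff_restrictLine_mul_linearForm_pow_of_lt hzP g₀ hn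
  · have hline : restrictLine (P i') (v i') (linearForm (ℓ i')) = 0 := by
      rw [restrictLine_linearForm, hℓP, hℓv]
      simp
    simp only [g₀, map_mul, map_prod]
    rw [Finset.prod_eq_zero (Finset.mem_Iio.2 hi') hline]
    simp

theorem surjective_coeff_restrictLine (hPv : ∀ i, LinearIndependent F ![P i, v i])
    (hℓP : ∀ j, ℓ j ⬝ᵥ P j = 0) (hℓv : ∀ j, ℓ j ⬝ᵥ v j = 0) (hℓ : ∀ i j, j < i → ℓ j ⬝ᵥ P i ≠ 0)
    (b : Fin s → ℕ) (hb : ∀ i : Fin s, b i + i ≤ d + 1) :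
    Function.Surjective fun (g : homogeneousSubmodule σ F d) (i : Fin s) (m : Fin (b i)) =>
      (restrictLine (P i) (v i) g).coeff m := by
  let f : homogeneousSubmodule σ F d →ₗ[F] (Σₗ i, Fin (b i)) → F :=
    LinearMap.pi fun a => (Polynomial.lcoeff F (ofLex a).2).comp
      ((restrictLine (P (ofLex a).1) (v (ofLex a).1)).toLinearMap.comp (Submodule.subtype _))
  choose g hg hdiag hlow hprev using fun a : Σₗ i, Fin (b i) =>
    exists_form_restrictLine_triangular (d := d) hPv hℓP hℓv hℓ (ofLex a).1 (ofLex a).2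
      (by have := hb (ofLex a).1; omega)
  have hf : Function.Surjective f := by
    refine f.surjective_of_triangular (fun a => ⟨g a, hg a⟩) hdiag ?_
    rintro ⟨i, m⟩ ⟨i', m'⟩ hlt
    rcases Sigma.Lex.lt_def.1 hlt with hi | ⟨hii, hm⟩
    · change (restrictLine (P i') (v i') (g _)).coeff m' = 0
      rw [hprev _ i' hi, Polynomial.coeff_zero]
    · dsimp only at hii
      subst hii
      exact hlow _ m' hm
  intro y
  obtain ⟨g, hgy⟩ := hf fun a => y (ofLex a).1 (ofLex a).2
  exact ⟨g, funext₂ fun i m => congrFun hgy (toLex ⟨i, m⟩)⟩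

end Interpolation

section HermitianForm

variable {F : Type*} [Field F] (τ : F →+* F)

def hermForm (u w : Fin 3 → F) : F := u 1 * τ (w 2) + u 2 * τ (w 1) - u 0 * τ (w 0)

def hermConj (w : Fin 3 → F) : Fin 3 → F := ![-τ (w 0), τ (w 2), τ (w 1)]

theorem hermConj_dotProduct (u w : Fin 3 → F) : hermConj τ w ⬝ᵥ u = hermForm τ u w := by
  simp [hermConj, hermForm, dotProduct, Fin.sum_univ_three]
  ring

theorem hermConj_smul (t : F) (w : Fin 3 → F) : hermConj τ (t • w) = τ t • hermConj τ w := by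
  ext j
  fin_cases j <;> simp [hermConj]

theorem hermConj_injective : Function.Injective (hermConj τ) := by
  intro u w h
  ext j
  fin_cases j
  · exact τ.injective (by simpa [hermConj] using congrFun h 0)
  · exact τ.injective (by simpa [hermConj] using congrFun h 2)
  · exact τ.injective (by simpa [hermConj] using congrFun h 1)

variable {τ}

theorem map_hermForm (hτ : Function.Involutive τ) (u w : Fin 3 → F) :
    τ (hermForm τ u w) = hermForm τ w u := by
  simp only [hermForm, map_sub, map_add, map_mul, hτ _]
  ring

theorem hermForm_ne_zero_of_linearIndependent (hτ : Function.Involutive τ) {u w : Fin 3 → F}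
    (h : LinearIndependent F ![u, w]) (huu : hermForm τ u u = 0) (hww : hermForm τ w w = 0) :
    hermForm τ w u ≠ 0 := by
  intro hwu
  have hu : u ≠ 0 := h.ne_zero 0
  have huw : hermForm τ u w = 0 := by rw [← map_hermForm hτ, hwu, map_zero]
  have hn : u ⨯₃ w ≠ 0 := crossProduct_ne_zero_iff_linearIndependent.2 h
  obtain ⟨a, ha⟩ := exists_smul_cross_eq_of_dotProduct_eq_zero (x := hermConj τ u) hn
    (by rwa [hermConj_dotProduct]) (by rwa [hermConj_dotProduct])
  obtain ⟨c, hc⟩ := exists_smul_cross_eq_of_dotProduct_eq_zero (x := hermConj τ w) hn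
    (by rwa [hermConj_dotProduct]) (by rwa [hermConj_dotProduct])
  have ha0 : a ≠ 0 := by
    rintro rfl
    refine hu (hermConj_injective τ ?_)
    simpa [← ha] using (hermConj_smul τ 0 0).symm
  refine (LinearIndependent.pair_iff' hu).1 h (τ (c / a)) (hermConj_injective τ ?_)
  rw [hermConj_smul, hτ, ← ha, ← hc, smul_smul, div_mul_cancel₀ _ ha0]

end HermitianForm

section HermitianCurve

variable {F : Type*} [Field F] {τ : F →+* F} {q : ℕ}

theorem eval_hermitianPoly (hτ : ∀ x, τ x = x ^ q) (u : Fin 3 → F) :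
    MvPolynomial.eval u (hermitianPoly F q) = hermForm τ u u := by
  simp only [hermitianPoly, hermForm, hτ, map_sub, map_add, map_mul, map_pow, MvPolynomial.eval_X]
  ring

theorem sum_eval_pderiv_hermitianPoly_mul (hq : (q : F) = 0) (hτ : ∀ x, τ x = x ^ q)
    (u w : Fin 3 → F) :
    ∑ j, MvPolynomial.eval u (pderiv j (hermitianPoly F q)) * w j = hermForm τ w u := by
  simp [hermitianPoly, hermForm, hτ, Fin.sum_univ_three, pderiv_X, Pi.single_apply, hq]
  ring

end HermitianCurve

theorem hermitian_h1_vanishing_general (F : Type*) [Field F] [Fintype F]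
    (p k q : ℕ) (hp : p.Prime) [CharP F p] (hk : 0 < k) (hq : q = p ^ k)
    (hcard : Fintype.card F = q ^ 2)
    (d s : ℕ)
    (P : Fin s → (Fin 3 → F)) (hP0 : ∀ i, P i ≠ 0)
    (hPX : ∀ i, eval (P i) (hermitianPoly F q) = 0)
    (hdist : ∀ i j, i ≠ j → ∀ t : F, P i ≠ t • P j)
    (b : Fin s → ℕ) (hb1 : ∀ i : Fin s, b i + i.val ≤ d + 1)
    (v : Fin s → (Fin 3 → F))
    (hvtan : ∀ i, ∑ j, eval (P i) (pderiv j (hermitianPoly F q)) * v i j = 0)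
    (hvind : ∀ i, ∀ t : F, v i ≠ t • P i) :
    Function.Surjective
      (fun (g : homogeneousSubmodule (Fin 3) F d) (i : Fin s) (m : Fin (b i)) =>
        (MvPolynomial.aeval
            (fun j => Polynomial.C (P i j) + Polynomial.X * Polynomial.C (v i j))
            (g : MvPolynomial (Fin 3) F)).coeff m) := by
  have : Fact p.Prime := ⟨hp⟩
  set τ := iterateFrobenius F p k
  have hτq : ∀ x, τ x = x ^ q := fun x => by rw [hq]; rfl
  have hτ : Function.Involutive τ := fun x => by
    rw [hτq, hτq, ← pow_mul, ← sq, ← hcard, FiniteField.pow_card]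
  have hq0 : (q : F) = 0 := by
    rw [hq, Nat.cast_pow, CharP.cast_eq_zero, zero_pow hk.ne']
  have hPP : ∀ i, hermForm τ (P i) (P i) = 0 := fun i => by
    rw [← eval_hermitianPoly hτq, hPX]
  have hPv : ∀ i, LinearIndependent F ![P i, v i] := fun i =>
    (LinearIndependent.pair_iff' (hP0 i)).2 fun t => (hvind i t).symm
  refine surjective_coeff_restrictLine hPv (ℓ := fun j => hermConj τ (P j)) (fun j => ?_)
    (fun j => ?_) (fun i j hji => ?_) b hb1 <;> rw [hermConj_dotProduct]
  · exact hPP j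
  · rw [← sum_eval_pderiv_hermitianPoly_mul hq0 hτq, hvtan]
  · exact hermForm_ne_zero_of_linearIndependent hτ
      ((LinearIndependent.pair_iff' (hP0 j)).2 fun t => (hdist i j hji.ne' t).symm) (hPP j) (hPP i)

/-- Fix `d ≥ s ≥ 1`, distinct rational points `P₁, …, P_s` on the Hermitian
curve `X` and integers `0 ≤ bᵢ ≤ d + 2 - i`, `bᵢ ≤ q + 1`.  Let
`E = Σ bᵢ Pᵢ`, viewed as a zero-dimensional subscheme of `ℙ²` of degree
`Σ bᵢ`; since each `bᵢ ≤ q + 1`, the connected component of `E` at `Pᵢ` is the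
curvilinear scheme of length `bᵢ` on the tangent line `L_{X,Pᵢ}`
(parametrized by `t ↦ Pᵢ + t·vᵢ` for a tangent direction `vᵢ`).  Then
`h¹(ℙ², I_E(d)) = 0`, i.e. `E` imposes independent conditions on degree-`d`
forms: the linear map sending a degree-`d` form `g` to the first `bᵢ` Taylor
coefficients of its restriction to each tangent line is surjective. -/
theorem hermitian_h1_vanishing (F : Type*) [Field F] [Fintype F]
    (p k q : ℕ) (hp : p.Prime) [CharP F p] (hk : 0 < k) (hq : q = p ^ k)
    (hcard : Fintype.card F = q ^ 2)
    (d s : ℕ) (hs1 : 1 ≤ s) (hsd : s ≤ d)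
    (P : Fin s → (Fin 3 → F)) (hP0 : ∀ i, P i ≠ 0)
    (hPX : ∀ i, eval (P i) (hermitianPoly F q) = 0)
    (hdist : ∀ i j, i ≠ j → ∀ t : F, P i ≠ t • P j)
    (b : Fin s → ℕ) (hb1 : ∀ i : Fin s, b i + i.val ≤ d + 1) (hb2 : ∀ i, b i ≤ q + 1)
    (v : Fin s → (Fin 3 → F))
    (hvtan : ∀ i, ∑ j, eval (P i) (pderiv j (hermitianPoly F q)) * v i j = 0)
    (hvind : ∀ i, ∀ t : F, v i ≠ t • P i) :
    Function.Surjective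
      (fun (g : homogeneousSubmodule (Fin 3) F d) (i : Fin s) (m : Fin (b i)) =>
        (MvPolynomial.aeval
            (fun j => Polynomial.C (P i j) + Polynomial.X * Polynomial.C (v i j))
            (g : MvPolynomial (Fin 3) F)).coeff m) :=
  hermitian_h1_vanishing_general F p k q hp hk hq hcard d s P hP0 hPX hdist b hb1 v hvtan hvind
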